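/- Let q = pⁿ be an odd prime power, K a finite field with q² elements, F its subfield of order q, and f : K → K a planar function such that for every c ∈ K the number of x ∈ K with f(x) = c equals the number of y ∈ K with y² = c. Let θ ∈ K \ {0} be such that θ^{q+1} (an element of F) is a nonsquare in F. Then for all a, b ∈ K the number of x ∈ K with f(x+a) − b ∈ θF equals 1 if b ∈ θF and equals q+1 if b ∉ θF; hence U_θ = {(x, tθ) : x ∈ K, t ∈ F} ∪ {(∞)} is a unital in the shift plane Π(f). -/

import Mathlib

/-- The point set of the shift plane `Π(f)`: affine points `(x,y)`, points at
infinity `(a)` for `a ∈ K`, and the point `(∞)`. -/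
abbrev ShiftPt (K : Type) : Type := (K × K) ⊕ (K ⊕ Unit)

/-- The affine line `L_{a,b} = {(x, f(x+a) − b) : x ∈ K} ∪ {(a)}` of the shift plane. -/
def affLine (K : Type) [Field K] (f : K → K) (a b : K) : Set (ShiftPt K) :=
  {P | (∃ x : K, P = Sum.inl (x, f (x + a) - b)) ∨ P = Sum.inr (Sum.inl a)}

/-- The vertical line `N_a = {(a,y) : y ∈ K} ∪ {(∞)}` of the shift plane. -/
def vertLine (K : Type) [Field K] (a : K) : Set (ShiftPt K) :=
  {P | (∃ y : K, P = Sum.inl (a, y)) ∨ P = Sum.inr (Sum.inr ())}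

/-- The line at infinity of the shift plane. -/
def lineAtInf (K : Type) : Set (ShiftPt K) :=
  {P | ∃ s : K ⊕ Unit, P = Sum.inr s}

/-- The set of all lines of the shift plane `Π(f)`. -/
def shiftLines (K : Type) [Field K] (f : K → K) : Set (Set (ShiftPt K)) :=
  {L | (∃ a b : K, L = affLine K f a b) ∨ (∃ a : K, L = vertLine K a) ∨ L = lineAtInf K}

/-- The set `θF = {tθ : t ∈ F}`, where `F = {t : t^q = t}` is the subfield of order `q`. -/
def scalarSet (K : Type) [Field K] (q : ℕ) (θ : K) : Set K :=
  {c | ∃ t : K, t ^ q = t ∧ c = t * θ}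

/-- The point set `U_θ = {(x, tθ) : x ∈ K, t ∈ F} ∪ {(∞)}`. -/
def unitalSet (K : Type) [Field K] (q : ℕ) (θ : K) : Set (ShiftPt K) :=
  {P | (∃ x t : K, t ^ q = t ∧ P = Sum.inl (x, t * θ)) ∨ P = Sum.inr (Sum.inr ())}

/-!
Counting the `x` with `f (x + a) - b ∈ θF` only involves the fibres of `f`, so `f` may be replaced
by squaring. The norm `y ^ (q + 1)` of any `y` lies in `F`, and `θ ^ (q + 1)` is a nonsquare in
`F`, so the only square on the line `θF` is `0`; this settles the case `b ∈ θF`. If `b ∉ θF`, then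
`K = F b ⊕ θF`, so the sets `{y | y ^ 2 - t b ∈ θF}` for `t ∈ F` partition `K`. Every `t ∈ F` is a
square in `K`, so for `t ≠ 0` these sets all have the size `N` of the one for `t = 1`, and
`1 + (q - 1) N = q ^ 2` gives `N = q + 1`.
-/

theorem Set.ncard_preimage_eq_of_ncard_fiber_eq {α β : Type*} [Finite α] [Finite β]
    {g h : α → β} (hgh : ∀ c, (g ⁻¹' {c}).ncard = (h ⁻¹' {c}).ncard) (S : Set β) :
    (g ⁻¹' S).ncard = (h ⁻¹' S).ncard := by
  classical
  have := Fintype.ofFinite α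
  have := Fintype.ofFinite β
  have sum_fibers (g : α → β) : (g ⁻¹' S).ncard = ∑ c ∈ S.toFinset, (g ⁻¹' {c}).ncard := by
    rw [Set.ncard_eq_toFinset_card',
      Finset.card_eq_sum_card_fiberwise (f := g) (t := S.toFinset) (by intro x; simp)]
    refine Finset.sum_congr rfl fun c hc => ?_
    rw [Set.ncard_eq_toFinset_card']
    congr 1
    ext x
    simp_all
  rw [sum_fibers g, sum_fibers h]
  exact Finset.sum_congr rfl fun c _ => hgh c

theorem sum_ncard_eq_natCard_of_existsUnique {ι α : Type*} [Fintype ι] [Finite α]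
    (P : ι → α → Prop) (h : ∀ a, ∃! i, P i a) : ∑ i, {a | P i a}.ncard = Nat.card α := by
  classical
  have := Fintype.ofFinite α
  simp only [Set.ncard_eq_toFinset_card', Set.toFinset_ofPred, Finset.card_filter]
  rw [Finset.sum_comm, Nat.card_eq_fintype_card, ← Finset.card_univ, Finset.card_eq_sum_ones]
  refine Finset.sum_congr rfl fun a _ => ?_
  rw [← Finset.card_filter, ← Fintype.existsUnique_iff_card_one]
  exact h a

namespace Submodule

variable {F V : Type*} [Field F] [AddCommGroup V] [Module F V] (W : Submodule F V) {b : V}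

theorem eq_of_sub_smul_mem (hb : b ∉ W) {v : V} {t t' : F} (ht : v - t • b ∈ W)
    (ht' : v - t' • b ∈ W) : t = t' := by
  by_contra hne
  have : (t' - t) • b ∈ W := by
    convert W.sub_mem ht ht' using 1
    rw [sub_smul]; abel
  exact hb ((W.smul_mem_iff (sub_ne_zero.mpr (Ne.symm hne))).mp this)

theorem existsUnique_sub_smul_mem [Finite V] (hb : b ∉ W)
    (hcard : Nat.card V = Nat.card F * Nat.card W) (v : V) : ∃! t : F, v - t • b ∈ W := by
  have hinj : Function.Injective fun tw : F × W => tw.1 • b + tw.2 := by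
    rintro ⟨t, w⟩ ⟨t', w'⟩ heq
    have htt' : t = t' := W.eq_of_sub_smul_mem hb (v := t • b + w)
      (by simp) (by rw [show t • b + (w : V) = t' • b + w' from heq]; simp)
    subst htt'
    simpa using heq
  obtain ⟨⟨t, w⟩, rfl⟩ := ((Nat.bijective_iff_injective_and_card _).mpr
    ⟨hinj, by rw [Nat.card_prod, hcard]⟩).2 v
  exact ⟨t, by simp, fun t' ht' => W.eq_of_sub_smul_mem hb ht' (by simp)⟩

end Submodule

section SquaresInCosets

variable {K : Type*} [Field K] (F : Subfield K) {θ : K}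

theorem ncard_sq_sub_mem_of_mem (hsq : ∀ y : K, y ^ 2 ∈ F ∙ θ → y = 0) {c : K}
    (hc : c ∈ F ∙ θ) : {y : K | y ^ 2 - c ∈ F ∙ θ}.ncard = 1 := by
  convert Set.ncard_singleton (0 : K)
  ext y
  rw [Set.mem_ofPred_eq, Submodule.sub_mem_iff_left _ hc, Set.mem_singleton_iff]
  exact ⟨hsq y, fun hy => by simp [hy]⟩

theorem ncard_sq_sub_smul_mem_eq (hF : ∀ t : F, IsSquare (t : K)) {t : F} (ht : t ≠ 0) (c : K) :
    {y : K | y ^ 2 - t • c ∈ F ∙ θ}.ncard = {y : K | y ^ 2 - c ∈ F ∙ θ}.ncard := by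
  obtain ⟨s, hs⟩ := hF t
  have hs0 : s ≠ 0 := by rintro rfl; exact ht (by simpa using hs)
  rw [← Set.ncard_preimage_of_injective_subset_range (mul_right_injective₀ hs0)
    (fun y _ => ⟨s⁻¹ * y, by field_simp⟩)]
  congr 1
  ext y
  have : (s * y) ^ 2 - t • c = t • (y ^ 2 - c) := by
    simp only [Subfield.smul_def, smul_eq_mul, hs]; ring
  simp only [Set.mem_preimage, Set.mem_ofPred_eq, this, Submodule.smul_mem_iff _ ht]

theorem ncard_sq_sub_mem_of_not_mem [Finite K] (hθ : θ ≠ 0)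
    (hcard : Nat.card K = Nat.card F ^ 2) (hsq : ∀ y : K, y ^ 2 ∈ F ∙ θ → y = 0)
    (hF : ∀ t : F, IsSquare (t : K)) {c : K} (hc : c ∉ F ∙ θ) :
    {y : K | y ^ 2 - c ∈ F ∙ θ}.ncard = Nat.card F + 1 := by
  classical
  have := Fintype.ofFinite F
  have hW : Nat.card (F ∙ θ) = Nat.card F :=
    Nat.card_congr (LinearEquiv.toSpanNonzeroSingleton F K θ hθ).toEquiv.symm
  have htotal : ∑ t : F, {y : K | y ^ 2 - t • c ∈ F ∙ θ}.ncard = Nat.card F ^ 2 := by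
    rw [sum_ncard_eq_natCard_of_existsUnique, hcard]
    exact fun y => (F ∙ θ).existsUnique_sub_smul_mem hc (by rw [hW, hcard, sq]) (y ^ 2)
  -- `htotal` becomes `1 + (|F| - 1) * N = |F| ^ 2`
  rw [← Finset.add_sum_erase _ _ (Finset.mem_univ 0), zero_smul,
    ncard_sq_sub_mem_of_mem F hsq (Submodule.zero_mem _),
    Finset.sum_congr rfl fun t ht => ncard_sq_sub_smul_mem_eq F hF (Finset.ne_of_mem_erase ht) c,
    Finset.sum_const, Finset.card_erase_of_mem (Finset.mem_univ _), Finset.card_univ,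
    ← Nat.card_eq_fintype_card, smul_eq_mul] at htotal
  have hF1 : 1 < Nat.card F := Finite.one_lt_card
  refine Nat.eq_of_mul_eq_mul_left (Nat.sub_pos_of_lt hF1) ?_
  zify [hF1.le] at htotal ⊢
  linear_combination htotal

end SquaresInCosets

theorem pow_eq_self_iff_eq_zero_or_pow_pred_eq_one {M₀ : Type*} [MonoidWithZero M₀]
    [IsCancelMulZero M₀] {x : M₀} {q : ℕ} (hq : q ≠ 0) : x ^ q = x ↔ x = 0 ∨ x ^ (q - 1) = 1 := by
  have hpow : x ^ q = x ^ (q - 1) * x := by rw [← pow_succ, Nat.sub_add_cancel (by omega)]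
  constructor
  · intro h
    refine or_iff_not_imp_left.mpr fun hx => mul_right_cancel₀ hx ?_
    rw [← hpow, h, one_mul]
  · rintro (rfl | h)
    · exact zero_pow hq
    · rw [hpow, h, one_mul]

theorem one_lt_of_card_eq_sq {α : Type*} [Fintype α] [Nontrivial α] {q : ℕ}
    (hcard : Fintype.card α = q ^ 2) : 1 < q := by
  have := Fintype.one_lt_card (α := α)
  rw [hcard] at this
  by_contra h
  interval_cases q <;> simp at this

section FrobeniusFixedField

variable (K : Type*) [Field K] (p : ℕ) [ExpChar K p] (n : ℕ)

def frobeniusFixedField : Subfield K := (iterateFrobenius K p n).eqLocusField (RingHom.id K)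

variable {K p n}

theorem mem_frobeniusFixedField {x : K} : x ∈ frobeniusFixedField K p n ↔ x ^ p ^ n = x :=
  Iff.rfl

variable [Fintype K]

theorem pow_succ_mem_frobeniusFixedField (hcard : Fintype.card K = (p ^ n) ^ 2) (x : K) :
    x ^ (p ^ n + 1) ∈ frobeniusFixedField K p n := by
  rw [mem_frobeniusFixedField, ← pow_mul, add_mul, one_mul, ← sq, ← hcard, pow_add,
    FiniteField.pow_card, pow_succ']

theorem natCard_frobeniusFixedField (hcard : Fintype.card K = (p ^ n) ^ 2) :
    Nat.card (frobeniusFixedField K p n) = p ^ n := by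
  classical
  set q := p ^ n
  have hq : 1 < q := one_lt_of_card_eq_sq hcard
  have hq1 : 0 < q - 1 := Nat.sub_pos_of_lt hq
  have hfactor : q ^ 2 - 1 = (q + 1) * (q - 1) := by
    zify [hq.le, Nat.one_le_pow 2 q (by omega)]; ring
  obtain ⟨g, hg⟩ := IsCyclic.exists_ofOrder_eq_natCard (α := Kˣ)
  rw [Nat.card_units, Nat.card_eq_fintype_card, hcard] at hg
  have hζ : IsPrimitiveRoot ((g : K) ^ (q + 1)) (q - 1) :=
    (IsPrimitiveRoot.orderOf (g : K)).pow
      (by rw [orderOf_units, hg]; exact Nat.sub_pos_of_lt (Nat.one_lt_pow two_ne_zero hq))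
      (by rw [orderOf_units, hg, hfactor])
  have hF : (frobeniusFixedField K p n : Set K) =
      ↑(insert 0 (Polynomial.nthRootsFinset (q - 1) (1 : K))) := by
    ext x
    simp only [SetLike.mem_coe, mem_frobeniusFixedField, Finset.coe_insert, Set.mem_insert_iff,
      Polynomial.mem_nthRootsFinset hq1]
    exact pow_eq_self_iff_eq_zero_or_pow_pred_eq_one (by omega)
  rw [← SetLike.coe_sort_coe, Nat.card_coe_set_eq, hF, Set.ncard_coe_finset,
    Finset.card_insert_of_notMem (by simp [Polynomial.mem_nthRootsFinset hq1, zero_pow hq1.ne']),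
    hζ.card_nthRootsFinset]
  omega

theorem eq_zero_of_sq_mem_span (hcard : Fintype.card K = (p ^ n) ^ 2) {θ : K}
    (hθ : ¬ ∃ s ∈ frobeniusFixedField K p n, s ^ 2 = θ ^ (p ^ n + 1)) {y : K}
    (hy : y ^ 2 ∈ frobeniusFixedField K p n ∙ θ) : y = 0 := by
  by_contra hy0
  obtain ⟨⟨t, ht⟩, hty⟩ := Submodule.mem_span_singleton.mp hy
  rw [Subfield.smul_def, smul_eq_mul] at hty
  have ht0 : t ≠ 0 := by
    rintro rfl
    exact hy0 (pow_eq_zero_iff two_ne_zero |>.mp (by rw [← hty, zero_mul]))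
  have htq : t ^ (p ^ n + 1) = t ^ 2 := by
    rw [pow_succ, (mem_frobeniusFixedField.mp ht), sq]
  refine hθ ⟨y ^ (p ^ n + 1) * t⁻¹,
    mul_mem (pow_succ_mem_frobeniusFixedField hcard y) (inv_mem ht), ?_⟩
  rw [mul_pow, ← pow_mul, mul_comm _ 2, pow_mul, ← hty, mul_pow, htq, inv_pow]
  field_simp

variable [CharP K p]

theorem isSquare_of_mem_frobeniusFixedField (hp : Odd p) (hcard : Fintype.card K = (p ^ n) ^ 2)
    (t : frobeniusFixedField K p n) : IsSquare (t : K) := by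
  obtain ⟨t, ht⟩ := t
  rcases eq_or_ne t 0 with rfl | ht0
  · exact ⟨0, by simp⟩
  obtain ⟨k, hk⟩ := hp.pow (n := n)
  have ht1 : t ^ (p ^ n - 1) = 1 :=
    ((pow_eq_self_iff_eq_zero_or_pow_pred_eq_one (by omega)).mp ht).resolve_left ht0
  have hhalf : (p ^ n) ^ 2 / 2 = (p ^ n - 1) * (k + 1) := by
    rw [hk, Nat.add_sub_cancel, show (2 * k + 1) ^ 2 = 2 * (2 * k * (k + 1)) + 1 by ring,
      Nat.mul_add_div two_pos]
    ring
  have hchar : ringChar K ≠ 2 := by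
    rw [ringChar.eq K p]; rintro rfl; exact Nat.not_odd_iff_even.mpr even_two hp
  rw [FiniteField.isSquare_iff hchar ht0, hcard, hhalf, pow_mul, ht1, one_pow]

end FrobeniusFixedField

section ShiftPlaneLines

variable {K : Type} [Field K] (q : ℕ) (θ : K)

theorem affLine_inter_unitalSet (f : K → K) (a b : K) :
    affLine K f a b ∩ unitalSet K q θ =
      (fun x => Sum.inl (x, f (x + a) - b)) '' {x | f (x + a) - b ∈ scalarSet K q θ} := by
  ext P
  simp only [affLine, unitalSet, scalarSet, Set.mem_inter_iff, Set.mem_ofPred_eq, Set.mem_image]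
  constructor
  · rintro ⟨⟨x, rfl⟩ | rfl, ⟨x', t, ht, heq⟩ | heq⟩
    · exact ⟨x, ⟨t, ht, (Prod.ext_iff.mp (Sum.inl_injective heq)).2⟩, rfl⟩
    all_goals simp at heq
  · rintro ⟨x, ⟨t, ht, heq⟩, rfl⟩
    exact ⟨Or.inl ⟨x, rfl⟩, Or.inl ⟨x, t, ht, by rw [heq]⟩⟩

theorem vertLine_inter_unitalSet (a : K) :
    vertLine K a ∩ unitalSet K q θ =
      insert (Sum.inr (Sum.inr ())) ((fun t => Sum.inl (a, t * θ)) '' {t | t ^ q = t}) := by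
  ext P
  simp only [vertLine, unitalSet, Set.mem_inter_iff, Set.mem_ofPred_eq, Set.mem_insert_iff,
    Set.mem_image]
  constructor
  · rintro ⟨⟨y, rfl⟩ | rfl, ⟨x', t, ht, heq⟩ | heq⟩
    · exact Or.inr ⟨t, ht, by rw [(Prod.mk.inj (Sum.inl_injective heq)).2]⟩
    · simp at heq
    all_goals simp
  · rintro (rfl | ⟨t, ht, rfl⟩)
    · simp
    · exact ⟨Or.inl ⟨_, rfl⟩, Or.inl ⟨a, t, ht, rfl⟩⟩

theorem lineAtInf_inter_unitalSet :
    lineAtInf K ∩ unitalSet K q θ = {Sum.inr (Sum.inr ())} := by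
  ext P
  simp only [lineAtInf, unitalSet, Set.mem_inter_iff, Set.mem_ofPred_eq, Set.mem_singleton_iff]
  constructor
  · rintro ⟨⟨s, rfl⟩, ⟨x, t, ht, heq⟩ | heq⟩ <;> simp_all
  · rintro rfl
    exact ⟨⟨_, rfl⟩, Or.inr rfl⟩

end ShiftPlaneLines

theorem scalarSet_eq_span {K : Type} [Field K] {p : ℕ} [ExpChar K p] (n : ℕ) (θ : K) :
    scalarSet K (p ^ n) θ = (frobeniusFixedField K p n ∙ θ : Submodule _ K) := by
  ext c
  simp only [scalarSet, Set.mem_ofPred_eq, SetLike.mem_coe, Submodule.mem_span_singleton,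
    Subtype.exists, exists_prop, Subfield.smul_def, smul_eq_mul, mem_frobeniusFixedField]
  exact exists_congr fun t => and_congr_right' eq_comm

theorem ncard_sq_sub_mem_scalarSet {K : Type} [Field K] [Fintype K] {p n : ℕ} [Fact p.Prime]
    [CharP K p] (hp : Odd p) (hcard : Fintype.card K = (p ^ n) ^ 2) {θ : K} (hθ : θ ≠ 0)
    (hns : ¬ ∃ s ∈ frobeniusFixedField K p n, s ^ 2 = θ ^ (p ^ n + 1)) (b : K) :
    (b ∈ scalarSet K (p ^ n) θ → {y : K | y ^ 2 - b ∈ scalarSet K (p ^ n) θ}.ncard = 1) ∧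
    (b ∉ scalarSet K (p ^ n) θ →
      {y : K | y ^ 2 - b ∈ scalarSet K (p ^ n) θ}.ncard = p ^ n + 1) := by
  set F := frobeniusFixedField K p n
  have hsq (y : K) : y ^ 2 ∈ F ∙ θ → y = 0 := eq_zero_of_sq_mem_span hcard hns
  have hcardF : Nat.card K = Nat.card F ^ 2 := by
    rw [natCard_frobeniusFixedField hcard, Nat.card_eq_fintype_card, hcard]
  simp only [scalarSet_eq_span, SetLike.mem_coe]
  refine ⟨ncard_sq_sub_mem_of_mem F hsq, fun hb => ?_⟩
  rw [ncard_sq_sub_mem_of_not_mem F hθ hcardF hsq (isSquare_of_mem_frobeniusFixedField hp hcard) hb,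
    natCard_frobeniusFixedField hcard]

theorem stmt2_general (p n q : ℕ) (hp : Nat.Prime p) (hpodd : Odd p) (hq : q = p ^ n)
    (K : Type) [Field K] [Fintype K] (hcard : Fintype.card K = q ^ 2)
    (f : K → K)
    (hfibers : ∀ c : K, {x : K | f x = c}.ncard = {y : K | y ^ 2 = c}.ncard)
    (θ : K) (hθ : θ ≠ 0)
    (hns : ¬ ∃ s : K, s ^ q = s ∧ s ^ 2 = θ ^ (q + 1)) :
    (∀ a b : K,
      (b ∈ scalarSet K q θ → {x : K | f (x + a) - b ∈ scalarSet K q θ}.ncard = 1) ∧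
      (b ∉ scalarSet K q θ → {x : K | f (x + a) - b ∈ scalarSet K q θ}.ncard = q + 1)) ∧
    (∀ L ∈ shiftLines K f,
      (L ∩ unitalSet K q θ).ncard = 1 ∨ (L ∩ unitalSet K q θ).ncard = q + 1) := by
  subst hq
  have : Fact p.Prime := ⟨hp⟩
  have : CharP K p := charP_of_card_eq_prime_pow (hcard.trans (pow_mul p n 2).symm)
  set S := scalarSet K (p ^ n) θ
  have hshift (a b : K) : {x | f (x + a) - b ∈ S}.ncard = {y : K | y ^ 2 - b ∈ S}.ncard := by
    calc {x | f (x + a) - b ∈ S}.ncard = ((· + a) ⁻¹' (f ⁻¹' {c | c - b ∈ S})).ncard := rfl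
      _ = (f ⁻¹' {c | c - b ∈ S}).ncard := Set.ncard_preimage_of_injective_subset_range
        (add_left_injective a) fun x _ => ⟨x - a, sub_add_cancel x a⟩
      _ = {y : K | y ^ 2 - b ∈ S}.ncard := Set.ncard_preimage_eq_of_ncard_fiber_eq hfibers _
  have hcount (a b : K) := hshift a b ▸ ncard_sq_sub_mem_scalarSet hpodd hcard hθ hns b
  refine ⟨hcount, ?_⟩
  rintro L (⟨a, b, rfl⟩ | ⟨a, rfl⟩ | rfl)
  · rw [affLine_inter_unitalSet, Set.ncard_image_of_injective _
      fun x y hxy => (Prod.mk.inj (Sum.inl_injective hxy)).1]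
    by_cases hb : b ∈ S
    exacts [Or.inl ((hcount a b).1 hb), Or.inr ((hcount a b).2 hb)]
  · right
    rw [vertLine_inter_unitalSet, Set.ncard_insert_of_notMem (by simp),
      Set.ncard_image_of_injective _
        fun s t hst => mul_right_cancel₀ hθ (Prod.mk.inj (Sum.inl_injective hst)).2]
    exact congrArg (· + 1) ((Nat.card_coe_set_eq _).symm.trans (natCard_frobeniusFixedField hcard))
  · left
    rw [lineAtInf_inter_unitalSet, Set.ncard_singleton]

/-- Theorem 2.4 (general part).  If `f` is planar on `K = F_{q²}` with
`#{x : f(x) = c} = #{y : y² = c}` for all `c`, and `θ ≠ 0` is such that `θ^{q+1}`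
is a nonsquare in the subfield `F` of order `q`, then for all `a b` the number of
`x` with `f(x+a) − b ∈ θF` is `1` if `b ∈ θF` and `q+1` otherwise; hence `U_θ`
is a unital in `Π(f)`. -/
theorem stmt2 (p n q : ℕ) (hp : Nat.Prime p) (hpodd : Odd p) (hn : 0 < n) (hq : q = p ^ n)
    (K : Type) [Field K] [Fintype K] (hcard : Fintype.card K = q ^ 2)
    (f : K → K)
    (hplanar : ∀ a : K, a ≠ 0 → Function.Bijective (fun x : K => f (x + a) - f x))
    (hfibers : ∀ c : K, {x : K | f x = c}.ncard = {y : K | y ^ 2 = c}.ncard)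
    (θ : K) (hθ : θ ≠ 0)
    (hns : ¬ ∃ s : K, s ^ q = s ∧ s ^ 2 = θ ^ (q + 1)) :
    (∀ a b : K,
      (b ∈ scalarSet K q θ → {x : K | f (x + a) - b ∈ scalarSet K q θ}.ncard = 1) ∧
      (b ∉ scalarSet K q θ → {x : K | f (x + a) - b ∈ scalarSet K q θ}.ncard = q + 1)) ∧
    (∀ L ∈ shiftLines K f,
      (L ∩ unitalSet K q θ).ncard = 1 ∨ (L ∩ unitalSet K q θ).ncard = q + 1) :=
  stmt2_general p n q hp hpodd hq K hcard f hfibers θ hθ hns
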